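/- As T → t⁺, the leading-order terms of ∂H/∂x at the zero vanna strike k⁻ and at the dual zero vanna strike k⁺ coincide: specifically, (T-t)^{3/2} · [∂H/∂x(t,T,x,k⁺,v) + ∂H/∂x(t,T,x,k⁻,v)] → 0, assuming I = I(T) stays bounded and bounded away from 0 and v > 0 is fixed, while each term individually is of order (T-t)^{-3/2} times a nonzero constant. -/

import Mathlib

open MeasureTheory Real Filter

/-- Standard normal density N'. -/
noncomputable def normPdf (z : ℝ) : ℝ := Real.exp (-z ^ 2 / 2) / Real.sqrt (2 * Real.pi)

/-- Standard normal CDF N. -/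
noncomputable def normCdf (z : ℝ) : ℝ := ∫ u in Set.Iic z, normPdf u

/-- Black-Scholes d1. -/
noncomputable def bsD1 (t T x k σ : ℝ) : ℝ :=
  (x - k) / (σ * Real.sqrt (T - t)) + σ / 2 * Real.sqrt (T - t)

/-- Black-Scholes d2. -/
noncomputable def bsD2 (t T x k σ : ℝ) : ℝ :=
  (x - k) / (σ * Real.sqrt (T - t)) - σ / 2 * Real.sqrt (T - t)

/-- Zero-rate Black-Scholes call price. -/
noncomputable def bsPrice (t T x k σ : ℝ) : ℝ :=
  Real.exp x * normCdf (bsD1 t T x k σ) - Real.exp k * normCdf (bsD2 t T x k σ)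

/-- Closed form of ∂H/∂x at the dual zero vanna strike k⁺ = x + I(T)²(T-t)/2. -/
noncomputable def dHplus (t x v : ℝ) (I : ℝ → ℝ) (T : ℝ) : ℝ :=
  1 / 4 * Real.exp x * normPdf (bsD2 t T x (x + (I T) ^ 2 * (T - t) / 2) v) /
    (v ^ 5 * (T - t) ^ ((3:ℝ) / 2)) * ((v ^ 2 - (I T) ^ 2) ^ 2 * (T - t) - 4 * v ^ 2)

/-- Closed form of ∂H/∂x at the zero vanna strike k⁻ = x - I(T)²(T-t)/2. -/
noncomputable def dHminus (t x v : ℝ) (I : ℝ → ℝ) (T : ℝ) : ℝ :=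
  1 / 4 * Real.exp x * normPdf (bsD2 t T x (x - (I T) ^ 2 * (T - t) / 2) v) /
    (v ^ 5 * (T - t) ^ ((3:ℝ) / 2)) * ((v ^ 2 + (I T) ^ 2) ^ 2 * (T - t) - 4 * v ^ 2)

lemma normPdf_cont : Continuous normPdf := by
  unfold normPdf
  continuity

lemma normPdf_pos (z : ℝ) : 0 < normPdf z := by
  unfold normPdf
  positivity

lemma d2_eq (t x v : ℝ) (hv : 0 < v) (a T : ℝ) (hT : t < T) :
    bsD2 t T x (x + a * (T - t) / 2) v = (-(a / (2 * v)) - v / 2) * Real.sqrt (T - t) := by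
  have hh : (0:ℝ) < T - t := sub_pos.2 hT
  have hs : 0 < Real.sqrt (T - t) := Real.sqrt_pos.2 hh
  have hmm : Real.sqrt (T - t) * Real.sqrt (T - t) = T - t := Real.mul_self_sqrt hh.le
  unfold bsD2
  field_simp
  linear_combination a * hmm

lemma tendsto_sqrt_sub (t : ℝ) :
    Filter.Tendsto (fun T => Real.sqrt (T - t)) (nhdsWithin t (Set.Ioi t)) (nhds 0) := by
  have h : Continuous fun T : ℝ => Real.sqrt (T - t) := by continuity
  have h2 : Filter.Tendsto (fun T => Real.sqrt (T - t)) (nhds t) (nhds 0) := by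
    simpa using h.tendsto t
  exact h2.mono_left nhdsWithin_le_nhds

/-- squeeze for d2: if |a T| ≤ B then bsD2 at k = x + a(T-t)/2 tends to 0. -/
lemma tendsto_d2 (t x v : ℝ) (hv : 0 < v) (a : ℝ → ℝ) (B : ℝ) (hB : ∀ T, |a T| ≤ B) :
    Filter.Tendsto (fun T => bsD2 t T x (x + a T * (T - t) / 2) v)
      (nhdsWithin t (Set.Ioi t)) (nhds 0) := by
  refine squeeze_zero_norm' (a := fun T => (B / (2 * v) + v / 2) * Real.sqrt (T - t)) ?_ ?_
  · filter_upwards [self_mem_nhdsWithin] with T hT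
    rw [d2_eq t x v hv (a T) T hT]
    rw [Real.norm_eq_abs, abs_mul, abs_of_nonneg (Real.sqrt_nonneg _)]
    apply mul_le_mul_of_nonneg_right _ (Real.sqrt_nonneg _)
    have h1 := abs_le.1 (hB T)
    have h2v : (0:ℝ) < 2 * v := by linarith
    have hu : a T / (2 * v) ≤ B / (2 * v) := (div_le_div_iff_of_pos_right h2v).mpr h1.2
    have hl : (-B) / (2 * v) ≤ a T / (2 * v) := (div_le_div_iff_of_pos_right h2v).mpr h1.1
    rw [neg_div] at hl
    rw [abs_le]
    constructor <;> [skip; skip] <;> linarith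
  · have := (tendsto_sqrt_sub t).const_mul (B / (2 * v) + v / 2)
    simpa using this

/-- As T → t⁺ each of ∂H/∂x(k⁺), ∂H/∂x(k⁻) is of order (T-t)^{-3/2} times the same nonzero
constant, while their leading parts cancel in the paper's decomposition (where they enter with
opposite signs): (T-t)^{3/2} (∂H/∂x(k⁺) - ∂H/∂x(k⁻)) → 0. -/
theorem bs_dH_leading_cancellation (t x v : ℝ) (hv : 0 < v) (I : ℝ → ℝ) (c1 c2 : ℝ)
    (hc1 : 0 < c1) (hI : ∀ T, c1 ≤ I T ∧ I T ≤ c2) :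
    (∃ L : ℝ, L ≠ 0 ∧
      Tendsto (fun T => (T - t) ^ ((3:ℝ) / 2) * dHplus t x v I T)
        (nhdsWithin t (Set.Ioi t)) (nhds L) ∧
      Tendsto (fun T => (T - t) ^ ((3:ℝ) / 2) * dHminus t x v I T)
        (nhdsWithin t (Set.Ioi t)) (nhds L)) ∧
    Tendsto (fun T => (T - t) ^ ((3:ℝ) / 2) * (dHplus t x v I T - dHminus t x v I T))
      (nhdsWithin t (Set.Ioi t)) (nhds 0) := by
  have hc2 : 0 < c2 := lt_of_lt_of_le hc1 ((hI t).1.trans (hI t).2)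
  have hIb : ∀ T, |(I T) ^ 2| ≤ c2 ^ 2 := fun T => by
    have h1 := (hI T).1; have h2 := (hI T).2
    rw [abs_of_nonneg (sq_nonneg _)]
    nlinarith
  have hIbneg : ∀ T, |(-((I T) ^ 2))| ≤ c2 ^ 2 := fun T => by
    rw [abs_neg]; exact hIb T
  set s := nhdsWithin t (Set.Ioi t) with hs
  have hsub : Tendsto (fun T : ℝ => T - t) s (nhds 0) := by
    have hcont : Continuous fun T : ℝ => T - t := by continuity
    have h2 : Tendsto (fun T : ℝ => T - t) (nhds t) (nhds 0) := by
      simpa using hcont.tendsto t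
    exact h2.mono_left nhdsWithin_le_nhds
  have hd2p : Tendsto (fun T => bsD2 t T x (x + (I T) ^ 2 * (T - t) / 2) v) s (nhds 0) :=
    tendsto_d2 t x v hv _ _ hIb
  have hd2m : Tendsto (fun T => bsD2 t T x (x - (I T) ^ 2 * (T - t) / 2) v) s (nhds 0) := by
    have h := tendsto_d2 t x v hv (fun T => -((I T) ^ 2)) (c2 ^ 2) hIbneg
    refine h.congr fun T => ?_
    congr 1
    ring
  have hnpp : Tendsto (fun T => normPdf (bsD2 t T x (x + (I T) ^ 2 * (T - t) / 2) v)) s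
      (nhds (normPdf 0)) := (normPdf_cont.tendsto 0).comp hd2p
  have hnpm : Tendsto (fun T => normPdf (bsD2 t T x (x - (I T) ^ 2 * (T - t) / 2) v)) s
      (nhds (normPdf 0)) := (normPdf_cont.tendsto 0).comp hd2m
  have hterm : ∀ (u : ℝ → ℝ), (∀ T, |u T| ≤ c2 ^ 2) →
      Tendsto (fun T => (v ^ 2 - u T) ^ 2 * (T - t) - 4 * v ^ 2) s (nhds (-(4 * v ^ 2))) := by
    intro u hu
    have h0 : Tendsto (fun T => (v ^ 2 - u T) ^ 2 * (T - t)) s (nhds 0) := by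
      refine squeeze_zero_norm' (a := fun T => (v ^ 2 + c2 ^ 2) ^ 2 * (T - t)) ?_ ?_
      · filter_upwards [self_mem_nhdsWithin] with T hT
        have hTt : (0:ℝ) ≤ T - t := (sub_pos.2 hT).le
        rw [Real.norm_eq_abs, abs_mul, abs_of_nonneg hTt]
        apply mul_le_mul_of_nonneg_right _ hTt
        rw [abs_of_nonneg (sq_nonneg _)]
        have h1 := abs_le.1 (hu T)
        nlinarith [sq_nonneg v, sq_nonneg (v ^ 2 - u T), sq_nonneg c2]
      · simpa using hsub.const_mul ((v ^ 2 + c2 ^ 2) ^ 2)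
    have h1 := h0.sub (tendsto_const_nhds (x := 4 * v ^ 2) (f := s))
    simpa using h1
  have htermp := hterm (fun T => (I T) ^ 2) hIb
  have htermm : Tendsto (fun T => (v ^ 2 + (I T) ^ 2) ^ 2 * (T - t) - 4 * v ^ 2) s
      (nhds (-(4 * v ^ 2))) := by
    have h := hterm (fun T => -((I T) ^ 2)) hIbneg
    refine h.congr fun T => ?_
    ring
  set L : ℝ := 1 / 4 * Real.exp x * normPdf 0 / v ^ 5 * (-(4 * v ^ 2)) with hL
  have hpos : 0 < 1 / 4 * Real.exp x * normPdf 0 / v ^ 5 :=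
    div_pos (mul_pos (mul_pos (by norm_num) (Real.exp_pos x)) (normPdf_pos 0)) (by positivity)
  have hLne : L ≠ 0 := by
    have hneg : L < 0 := mul_neg_of_pos_of_neg hpos (by nlinarith)
    exact hneg.ne
  have hplus : Tendsto (fun T => (T - t) ^ ((3:ℝ) / 2) * dHplus t x v I T) s (nhds L) := by
    have hprod : Tendsto (fun T => 1 / 4 * Real.exp x *
        normPdf (bsD2 t T x (x + (I T) ^ 2 * (T - t) / 2) v) / v ^ 5 *
        ((v ^ 2 - (I T) ^ 2) ^ 2 * (T - t) - 4 * v ^ 2)) s (nhds L) := by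
      rw [hL]
      exact ((tendsto_const_nhds.mul hnpp).div_const _).mul htermp
    refine hprod.congr' ?_
    filter_upwards [self_mem_nhdsWithin] with T hT
    have hpow : (T - t) ^ ((3:ℝ) / 2) ≠ 0 := (Real.rpow_pos_of_pos (sub_pos.2 hT) _).ne'
    unfold dHplus
    field_simp
  have hminus : Tendsto (fun T => (T - t) ^ ((3:ℝ) / 2) * dHminus t x v I T) s (nhds L) := by
    have hprod : Tendsto (fun T => 1 / 4 * Real.exp x *
        normPdf (bsD2 t T x (x - (I T) ^ 2 * (T - t) / 2) v) / v ^ 5 *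
        ((v ^ 2 + (I T) ^ 2) ^ 2 * (T - t) - 4 * v ^ 2)) s (nhds L) := by
      rw [hL]
      exact ((tendsto_const_nhds.mul hnpm).div_const _).mul htermm
    refine hprod.congr' ?_
    filter_upwards [self_mem_nhdsWithin] with T hT
    have hpow : (T - t) ^ ((3:ℝ) / 2) ≠ 0 := (Real.rpow_pos_of_pos (sub_pos.2 hT) _).ne'
    unfold dHminus
    field_simp
  refine ⟨⟨L, hLne, hplus, hminus⟩, ?_⟩
  have hdiff := hplus.sub hminus
  simp only [mul_sub]
  simpa using hdiff
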